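/- Let (g, [·,·], α) be a regular hom-Lie algebra and N: g → g a hom-Nijenhuis operator commuting with α. For T_t = Id + tN and the deformed bracket [u,v]_t = [u,v] + t[u,v]_N, we have T_t([u,v]_t) = [T_t(u), T_t(v)] for all u, v ∈ g and all t ∈ ℝ; i.e., the deformation generated by N is trivial. -/
import Mathlib

/-- A regular hom-Lie algebra: a real vector space with a skew-symmetric bilinear
bracket and a linear automorphism `e` (the structure map `α`) satisfying the
hom-Jacobi identity, with `e` an algebra automorphism. -/
structure RegularHomLieAlgebra (g : Type*) [AddCommGroup g] [Module ℝ g] where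
  bracket : g →ₗ[ℝ] g →ₗ[ℝ] g
  e : g ≃ₗ[ℝ] g
  skew : ∀ u v, bracket u v = - bracket v u
  jacobi : ∀ u v w,
    bracket (e u) (bracket v w) + bracket (e v) (bracket w u)
      + bracket (e w) (bracket u v) = 0
  mult : ∀ u v, e (bracket u v) = bracket (e u) (e v)

/-- The deformed bracket `[u,v]_N = [Nu,v] + [u,Nv] − N[u,v]`. -/
def nijBracket {g : Type*} [AddCommGroup g] [Module ℝ g]
    (L : RegularHomLieAlgebra g) (N : g →ₗ[ℝ] g) (u v : g) : g :=
  L.bracket (N u) v + L.bracket u (N v) - N (L.bracket u v)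

/-- The deformation generated by a hom-Nijenhuis operator `N` is trivial: with
`T_t = Id + tN` and `[u,v]_t = [u,v] + t[u,v]_N`, we have
`T_t([u,v]_t) = [T_t(u), T_t(v)]`. -/
theorem nijenhuis_deformation_trivial {g : Type*} [AddCommGroup g] [Module ℝ g]
    (L : RegularHomLieAlgebra g) (N : g →ₗ[ℝ] g)
    (hcomm : ∀ u, N (L.e u) = L.e (N u))
    (hN : ∀ u v, L.bracket (N u) (N v) = N (nijBracket L N u v)) :
    ∀ (t : ℝ) (u v : g),
      (L.bracket u v + t • nijBracket L N u v)
          + t • N (L.bracket u v + t • nijBracket L N u v)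
        = L.bracket (u + t • N u) (v + t • N v) := by
  intro t u v
  have key : t • N (nijBracket L N u v) = t • L.bracket (N u) (N v) := by rw [hN]
  simp only [map_add, map_smul, LinearMap.add_apply, LinearMap.smul_apply,
    smul_add, smul_smul, mul_comm]
  rw [← smul_smul, key]
  simp only [nijBracket, map_add, map_sub, LinearMap.add_apply, LinearMap.sub_apply,
    smul_add, smul_sub]
  rw [smul_smul]
  abel
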